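/- arXiv:1603.09530 — 7 statements merged into one kernel-verified Lean document; each statement's English description precedes it below -/
import Mathlib

section
/- Let h_pd, h_sd, λ_p, μ_p, ψ be real numbers with 0 < λ_p < μ_p, and set N_p = (λ_p − λ_p²)/(μ_p − λ_p). Suppose K = −h_sd·((λ_p²/μ_p)·(μ_p − h_pd)·(1 − μ_p) − (λ_p·ψ − N_p)·(λ_p² − 2·λ_p·μ_p + μ_p²)) > 0 and f ≥ 0. Then the feasible set {b ∈ ℝ : 0 ≤ b ≤ 1 and φ_ψ(b) ≤ 0} equals the closed interval [0, min(1, f)]. -/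
set_option maxHeartbeats 1000000

/-- With `0 < λ_p < μ_p`, `N_p = (λ_p − λ_p²)/(μ_p − λ_p)`, `K > 0` and
`f ≥ 0`, the feasible set `{b : 0 ≤ b ≤ 1 ∧ φ_ψ(b) ≤ 0}` equals `[0, min 1 f]`. -/
theorem feasible_set_eq_Icc
    (h_pd h_sd lam_p mu_p ψ : ℝ)
    (hlp : 0 < lam_p) (hlm : lam_p < mu_p)
    (N_p : ℝ) (hNp : N_p = (lam_p - lam_p ^ 2) / (mu_p - lam_p))
    (φ : ℝ → ℝ)
    (hφ : ∀ b : ℝ, φ b =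
      lam_p * (mu_p - h_pd) *
        ((1 - b) * h_sd * (1 - mu_p) * lam_p - (mu_p - h_pd) * mu_p * lam_p
          - h_pd * lam_p + mu_p ^ 2)
      - mu_p * (mu_p - lam_p) *
        ((1 - b) * h_sd * (mu_p - lam_p) - lam_p * (mu_p - h_pd)) * (lam_p * ψ - N_p))
    (K : ℝ)
    (hK : K = -h_sd * ((lam_p ^ 2 / mu_p) * (mu_p - h_pd) * (1 - mu_p)
      - (lam_p * ψ - N_p) * (lam_p ^ 2 - 2 * lam_p * mu_p + mu_p ^ 2)))
    (hKpos : 0 < K)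
    (f : ℝ)
    (hf : f = 1 -
      (lam_p ^ 2 * (mu_p - h_pd) * (-h_pd / mu_p - (mu_p - h_pd))
        + lam_p * mu_p * (mu_p - h_pd)
        - (lam_p * ψ - N_p) * (mu_p - h_pd) * (lam_p ^ 2 - lam_p * mu_p)) / K)
    (hf0 : 0 ≤ f) :
    {b : ℝ | 0 ≤ b ∧ b ≤ 1 ∧ φ b ≤ 0} = Set.Icc 0 (min 1 f) := by
  have hmu : 0 < mu_p := hlp.trans hlm
  have hmune : mu_p ≠ 0 := ne_of_gt hmu
  have hKne : K ≠ 0 := ne_of_gt hKpos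
  have hml : mu_p - lam_p ≠ 0 := sub_ne_zero.mpr (ne_of_gt hlm)
  set A : ℝ := lam_p ^ 2 * (mu_p - h_pd) * (-h_pd / mu_p - (mu_p - h_pd))
      + lam_p * mu_p * (mu_p - h_pd)
      - (lam_p * ψ - N_p) * (mu_p - h_pd) * (lam_p ^ 2 - lam_p * mu_p) with hA
  have hKf : K * f = K - A := by
    rw [hf]; field_simp
  have key : ∀ b : ℝ, φ b = mu_p * K * (b - f) := by
    intro b
    have : mu_p * K * (b - f) = mu_p * K * b - mu_p * (K * f) := by ring
    rw [this, hKf]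
    rw [hφ, hA, hK, hNp]
    field_simp
    ring
  have hmk : 0 < mu_p * K := mul_pos hmu hKpos
  ext b
  simp only [Set.mem_setOf_eq, Set.mem_Icc, le_min_iff, key]
  constructor
  · rintro ⟨h0, h1, hφb⟩
    refine ⟨h0, h1, ?_⟩
    nlinarith
  · rintro ⟨h0, h1, h2⟩
    refine ⟨h0, h1, ?_⟩
    nlinarith
end

section
/- (Lemma 1) Let h_pd, h_sd, λ_p, μ_p, ψ be real numbers with 0 < h_sd and 0 < λ_p < μ_p, and set N_p = (λ_p − λ_p²)/(μ_p − λ_p). Suppose K = −h_sd·((λ_p²/μ_p)·(μ_p − h_pd)·(1 − μ_p) − (λ_p·ψ − N_p)·(λ_p² − 2·λ_p·μ_p + μ_p²)) > 0 and f ≥ 0. Then b* = min(1, f) is a maximizer of problem P2: b* lies in the feasible set S = {b ∈ ℝ : 0 ≤ b ≤ 1 and φ_ψ(b) ≤ 0}, and for every b ∈ S, μ_s(b) ≤ μ_s(b*), where μ_s(b) = b·h_sd·(1 − λ_p/μ_p). -/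
/-!
Clearing the denominators of `K` and `f` shows that `φ_ψ(b) = μ_p K (b - f)`. Since `μ_p K > 0`,
the feasible set of P2 is the interval `[0, min 1 f]`, and the throughput `μ_s` is nondecreasing
in `b` because `λ_p < μ_p`, so it is maximised at the right endpoint `min 1 f`.
-/

open Set

namespace P2

variable (h_pd h_sd lam_p mu_p ψ N_p : ℝ)

def phi (b : ℝ) : ℝ :=
  lam_p * (mu_p - h_pd) *
    ((1 - b) * h_sd * (1 - mu_p) * lam_p - (mu_p - h_pd) * mu_p * lam_p
      - h_pd * lam_p + mu_p ^ 2)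
  - mu_p * (mu_p - lam_p) *
    ((1 - b) * h_sd * (mu_p - lam_p) - lam_p * (mu_p - h_pd)) * (lam_p * ψ - N_p)

noncomputable def K : ℝ :=
  -h_sd * ((lam_p ^ 2 / mu_p) * (mu_p - h_pd) * (1 - mu_p)
    - (lam_p * ψ - N_p) * (lam_p ^ 2 - 2 * lam_p * mu_p + mu_p ^ 2))

noncomputable def f : ℝ :=
  1 - (lam_p ^ 2 * (mu_p - h_pd) * (-h_pd / mu_p - (mu_p - h_pd))
      + lam_p * mu_p * (mu_p - h_pd)
      - (lam_p * ψ - N_p) * (mu_p - h_pd) * (lam_p ^ 2 - lam_p * mu_p))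
    / K h_pd h_sd lam_p mu_p ψ N_p

theorem phi_eq_mul_sub {h_pd h_sd lam_p mu_p ψ N_p : ℝ} (hmu : mu_p ≠ 0)
    (hK : K h_pd h_sd lam_p mu_p ψ N_p ≠ 0) (b : ℝ) :
    phi h_pd h_sd lam_p mu_p ψ N_p b =
      mu_p * K h_pd h_sd lam_p mu_p ψ N_p * (b - f h_pd h_sd lam_p mu_p ψ N_p) := by
  unfold f
  field_simp
  unfold phi K
  field_simp
  ring

end P2

theorem setOf_mul_sub_nonpos_eq_Icc {c : ℝ} (hc : 0 < c) (f : ℝ) :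
    {b : ℝ | 0 ≤ b ∧ b ≤ 1 ∧ c * (b - f) ≤ 0} = Icc 0 (min 1 f) := by
  ext b
  have hbf : c * (b - f) ≤ 0 ↔ b ≤ f := by
    rw [← smul_eq_mul, smul_nonpos_iff_nonpos_of_pos_left hc, sub_nonpos]
  simp only [mem_ofPred_eq, mem_Icc, le_min_iff, hbf]

theorem monotone_mul_mul_one_sub_div {h lam mu : ℝ} (hh : 0 ≤ h) (hmu : 0 < mu)
    (hlm : lam ≤ mu) : Monotone fun b : ℝ ↦ b * h * (1 - lam / mu) := by
  have hc : 0 ≤ 1 - lam / mu := sub_nonneg.2 ((div_le_one hmu).2 hlm)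
  exact fun _ _ hab ↦ mul_le_mul_of_nonneg_right (mul_le_mul_of_nonneg_right hab hh) hc

theorem lemma1_optimal_b_P2_general
    (h_pd h_sd lam_p mu_p ψ : ℝ)
    (hsd : 0 < h_sd) (hlp : 0 < lam_p) (hlm : lam_p < mu_p)
    (N_p : ℝ)
    (φ : ℝ → ℝ)
    (hφ : ∀ b : ℝ, φ b =
      lam_p * (mu_p - h_pd) *
        ((1 - b) * h_sd * (1 - mu_p) * lam_p - (mu_p - h_pd) * mu_p * lam_p
          - h_pd * lam_p + mu_p ^ 2)
      - mu_p * (mu_p - lam_p) *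
        ((1 - b) * h_sd * (mu_p - lam_p) - lam_p * (mu_p - h_pd)) * (lam_p * ψ - N_p))
    (K : ℝ)
    (hK : K = -h_sd * ((lam_p ^ 2 / mu_p) * (mu_p - h_pd) * (1 - mu_p)
      - (lam_p * ψ - N_p) * (lam_p ^ 2 - 2 * lam_p * mu_p + mu_p ^ 2)))
    (hKpos : 0 < K)
    (f : ℝ)
    (hf : f = 1 -
      (lam_p ^ 2 * (mu_p - h_pd) * (-h_pd / mu_p - (mu_p - h_pd))
        + lam_p * mu_p * (mu_p - h_pd)
        - (lam_p * ψ - N_p) * (mu_p - h_pd) * (lam_p ^ 2 - lam_p * mu_p)) / K)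
    (hf0 : 0 ≤ f)
    (μ_s : ℝ → ℝ)
    (hμs : ∀ b : ℝ, μ_s b = b * h_sd * (1 - lam_p / mu_p)) :
    min 1 f ∈ {b : ℝ | 0 ≤ b ∧ b ≤ 1 ∧ φ b ≤ 0} ∧
      ∀ b ∈ {b : ℝ | 0 ≤ b ∧ b ≤ 1 ∧ φ b ≤ 0}, μ_s b ≤ μ_s (min 1 f) := by
  have hmu : 0 < mu_p := hlp.trans hlm
  have hφ' : φ = fun b ↦ mu_p * K * (b - f) := by
    subst hK hf
    exact funext fun b ↦ (hφ b).trans (P2.phi_eq_mul_sub hmu.ne' hKpos.ne' b)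
  have hμs' : μ_s = fun b ↦ b * h_sd * (1 - lam_p / mu_p) := funext hμs
  subst hφ' hμs'
  rw [setOf_mul_sub_nonpos_eq_Icc (mul_pos hmu hKpos)]
  exact ⟨right_mem_Icc.2 (le_min zero_le_one hf0),
    fun _ hb ↦ monotone_mul_mul_one_sub_div hsd.le hmu hlm.le hb.2⟩

/-- Lemma 1: Under `0 < h_sd`, `0 < λ_p < μ_p`, `K > 0` and `f ≥ 0`,
`b* = min 1 f` is a maximizer of problem P2: it is feasible, and every feasible `b`
satisfies `μ_s(b) ≤ μ_s(b*)`, where `μ_s(b) = b·h_sd·(1 − λ_p/μ_p)`. -/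
theorem lemma1_optimal_b_P2
    (h_pd h_sd lam_p mu_p ψ : ℝ)
    (hsd : 0 < h_sd) (hlp : 0 < lam_p) (hlm : lam_p < mu_p)
    (N_p : ℝ) (hNp : N_p = (lam_p - lam_p ^ 2) / (mu_p - lam_p))
    (φ : ℝ → ℝ)
    (hφ : ∀ b : ℝ, φ b =
      lam_p * (mu_p - h_pd) *
        ((1 - b) * h_sd * (1 - mu_p) * lam_p - (mu_p - h_pd) * mu_p * lam_p
          - h_pd * lam_p + mu_p ^ 2)
      - mu_p * (mu_p - lam_p) *
        ((1 - b) * h_sd * (mu_p - lam_p) - lam_p * (mu_p - h_pd)) * (lam_p * ψ - N_p))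
    (K : ℝ)
    (hK : K = -h_sd * ((lam_p ^ 2 / mu_p) * (mu_p - h_pd) * (1 - mu_p)
      - (lam_p * ψ - N_p) * (lam_p ^ 2 - 2 * lam_p * mu_p + mu_p ^ 2)))
    (hKpos : 0 < K)
    (f : ℝ)
    (hf : f = 1 -
      (lam_p ^ 2 * (mu_p - h_pd) * (-h_pd / mu_p - (mu_p - h_pd))
        + lam_p * mu_p * (mu_p - h_pd)
        - (lam_p * ψ - N_p) * (mu_p - h_pd) * (lam_p ^ 2 - lam_p * mu_p)) / K)
    (hf0 : 0 ≤ f)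
    (μ_s : ℝ → ℝ)
    (hμs : ∀ b : ℝ, μ_s b = b * h_sd * (1 - lam_p / mu_p)) :
    min 1 f ∈ {b : ℝ | 0 ≤ b ∧ b ≤ 1 ∧ φ b ≤ 0} ∧
      ∀ b ∈ {b : ℝ | 0 ≤ b ∧ b ≤ 1 ∧ φ b ≤ 0}, μ_s b ≤ μ_s (min 1 f) :=
  lemma1_optimal_b_P2_general h_pd h_sd lam_p mu_p ψ hsd hlp hlm N_p φ hφ K hK hKpos f hf hf0 μ_s
    hμs
end

section
/- Let h_sd, λ_p, λ_s, μ_p be real numbers with 0 < h_sd, 0 < λ_p < μ_p ≤ 1 and 0 < λ_s < 1. Then the secondary average delay D_s(b) = N_s(b)/λ_s is strictly antitone (strictly monotonically decreasing) in b on the set {b ∈ ℝ : λ_s·μ_p < b·h_sd·(μ_p − λ_p)}. -/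
/-- With `0 < h_sd`, `0 < λ_p < μ_p ≤ 1` and `0 < λ_s < 1`, the secondary
average delay `D_s(b) = N_s(b)/λ_s` is strictly antitone in `b` on the stability region
`{b : λ_s·μ_p < b·h_sd·(μ_p − λ_p)}`. -/
theorem secondary_delay_strictAntiOn
    (h_sd lam_p lam_s mu_p : ℝ)
    (hsd : 0 < h_sd) (hlp : 0 < lam_p) (hlm : lam_p < mu_p) (hmp1 : mu_p ≤ 1)
    (hls0 : 0 < lam_s) (hls1 : lam_s < 1)
    (N_s : ℝ → ℝ)
    (hNs : ∀ b : ℝ, N_s b =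
      (b * h_sd * lam_p * lam_s * (1 - mu_p)
        + (lam_s - lam_s ^ 2) * (mu_p - lam_p) * mu_p)
      / ((mu_p - lam_p) * (b * h_sd * (mu_p - lam_p) - lam_s * mu_p)))
    (D_s : ℝ → ℝ)
    (hDs : ∀ b : ℝ, D_s b = N_s b / lam_s) :
    StrictAntiOn D_s {b : ℝ | lam_s * mu_p < b * h_sd * (mu_p - lam_p)} := by
  intro a ha b hb hab
  simp only [Set.mem_setOf_eq] at ha hb
  rw [hDs, hDs, div_lt_div_iff_of_pos_right hls0, hNs, hNs]
  have hml : 0 < mu_p - lam_p := by linarith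
  have hDa : 0 < (mu_p - lam_p) * (a * h_sd * (mu_p - lam_p) - lam_s * mu_p) := by
    apply mul_pos hml; linarith
  have hDb : 0 < (mu_p - lam_p) * (b * h_sd * (mu_p - lam_p) - lam_s * mu_p) := by
    apply mul_pos hml; linarith
  rw [div_lt_div_iff₀ hDb hDa]
  have hmu0 : 0 < mu_p := by linarith
  have key : 0 < (b - a) * h_sd := mul_pos (by linarith) hsd
  nlinarith [mul_pos key (mul_pos (mul_pos hlp hls0) (mul_pos hls0 hmu0)),
    mul_pos key (mul_pos (mul_pos hls0 (by linarith : (0:ℝ) < 1 - lam_s)) (mul_pos hml hmu0)),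
    mul_nonneg (le_of_lt (mul_pos key (mul_pos (mul_pos hlp hls0) (mul_pos hls0 hmu0)))) (by linarith : (0:ℝ) ≤ 1 - mu_p),
    sq_nonneg (mu_p - lam_p), mul_pos hml hml]
end

section
/- Let h_sd, λ_p, λ_s, μ_p be real numbers with λ_p ≠ μ_p and λ_s ≠ 0, and let b be a real number with λ_s·μ_p·(μ_p − λ_p) ≠ h_sd·(μ_p − λ_p)²·b. Then the function D_s(b) = N_s(b)/λ_s has derivative at b equal to −h_sd·μ_p·(λ_p·λ_s²·(1−μ_p)·(μ_p−λ_p) + (λ_s − λ_s²)·(μ_p−λ_p)³) / (λ_s·(λ_s·μ_p·(μ_p−λ_p) − h_sd·(μ_p−λ_p)²·b)²). -/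
/-! As a function of `b`, `N_s` is a linear-fractional map `(a b + c) / (d b + e)`, whose
derivative is `(a e - c d) / (d b + e)²`; dividing by `λ_s` and clearing denominators gives (14). -/

theorem hasDerivAt_affine_div_affine {𝕜 : Type*} [NontriviallyNormedField 𝕜]
    (a c d e x : 𝕜) (hx : d * x + e ≠ 0) :
    HasDerivAt (fun y => (a * y + c) / (d * y + e)) ((a * e - c * d) / (d * x + e) ^ 2) x := by
  have hnum : HasDerivAt (fun y => a * y + c) a x := by
    simpa using ((hasDerivAt_id x).const_mul a).add_const c
  have hden : HasDerivAt (fun y => d * y + e) d x := by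
    simpa using ((hasDerivAt_id x).const_mul d).add_const e
  exact (hnum.div hden hx).congr_deriv (by ring)

theorem secondary_delay_hasDerivAt_general
    (h_sd lam_p lam_s mu_p : ℝ)
    (hls : lam_s ≠ 0)
    (b : ℝ)
    (hden : lam_s * mu_p * (mu_p - lam_p) ≠ h_sd * (mu_p - lam_p) ^ 2 * b)
    (N_s : ℝ → ℝ)
    (hNs : ∀ x : ℝ, N_s x =
      (x * h_sd * lam_p * lam_s * (1 - mu_p)
        + (lam_s - lam_s ^ 2) * (mu_p - lam_p) * mu_p)
      / ((mu_p - lam_p) * (x * h_sd * (mu_p - lam_p) - lam_s * mu_p)))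
    (D_s : ℝ → ℝ)
    (hDs : ∀ x : ℝ, D_s x = N_s x / lam_s) :
    HasDerivAt D_s
      (-h_sd * mu_p *
        (lam_p * lam_s ^ 2 * (1 - mu_p) * (mu_p - lam_p)
          + (lam_s - lam_s ^ 2) * (mu_p - lam_p) ^ 3)
        / (lam_s * (lam_s * mu_p * (mu_p - lam_p) - h_sd * (mu_p - lam_p) ^ 2 * b) ^ 2))
      b := by
  set k := mu_p - lam_p
  have hN : N_s = fun x => (h_sd * lam_p * lam_s * (1 - mu_p) * x
      + (lam_s - lam_s ^ 2) * k * mu_p) / (h_sd * k ^ 2 * x - lam_s * mu_p * k) := by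
    funext x; rw [hNs]; ring
  have hpole : h_sd * k ^ 2 * b + -(lam_s * mu_p * k) ≠ 0 := sub_ne_zero.mpr hden.symm
  have hN_deriv := hasDerivAt_affine_div_affine (h_sd * lam_p * lam_s * (1 - mu_p))
    ((lam_s - lam_s ^ 2) * k * mu_p) (h_sd * k ^ 2) (-(lam_s * mu_p * k)) b hpole
  simp only [← sub_eq_add_neg, ← hN] at hN_deriv
  rw [show D_s = fun x => N_s x / lam_s from funext hDs]
  refine (hN_deriv.div_const lam_s).congr_deriv ?_
  field_simp
  ring

/-- Derivative formula (14) of the paper: under `λ_p ≠ μ_p`, `λ_s ≠ 0`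
and `λ_s·μ_p·(μ_p − λ_p) ≠ h_sd·(μ_p − λ_p)²·b`, the secondary delay `D_s` has
derivative at `b` equal to
`−h_sd·μ_p·(λ_p·λ_s²·(1−μ_p)·(μ_p−λ_p) + (λ_s − λ_s²)·(μ_p−λ_p)³)
  / (λ_s·(λ_s·μ_p·(μ_p−λ_p) − h_sd·(μ_p−λ_p)²·b)²)`. -/
theorem secondary_delay_hasDerivAt
    (h_sd lam_p lam_s mu_p : ℝ)
    (hne : lam_p ≠ mu_p) (hls : lam_s ≠ 0)
    (b : ℝ)
    (hden : lam_s * mu_p * (mu_p - lam_p) ≠ h_sd * (mu_p - lam_p) ^ 2 * b)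
    (N_s : ℝ → ℝ)
    (hNs : ∀ x : ℝ, N_s x =
      (x * h_sd * lam_p * lam_s * (1 - mu_p)
        + (lam_s - lam_s ^ 2) * (mu_p - lam_p) * mu_p)
      / ((mu_p - lam_p) * (x * h_sd * (mu_p - lam_p) - lam_s * mu_p)))
    (D_s : ℝ → ℝ)
    (hDs : ∀ x : ℝ, D_s x = N_s x / lam_s) :
    HasDerivAt D_s
      (-h_sd * mu_p *
        (lam_p * lam_s ^ 2 * (1 - mu_p) * (mu_p - lam_p)
          + (lam_s - lam_s ^ 2) * (mu_p - lam_p) ^ 3)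
        / (lam_s * (lam_s * mu_p * (mu_p - lam_p) - h_sd * (mu_p - lam_p) ^ 2 * b) ^ 2))
      b :=
  secondary_delay_hasDerivAt_general h_sd lam_p lam_s mu_p hls b hden N_s hNs D_s hDs
end

section
/- (Equivalence of P2 and P4) Let h_sd, λ_p, λ_s, μ_p be real numbers with 0 < h_sd, 0 < λ_p < μ_p ≤ 1 and 0 < λ_s < 1, and let S' be any subset of {b ∈ ℝ : λ_s·μ_p < b·h_sd·(μ_p − λ_p)}. Then for every b ∈ S', b maximizes the secondary throughput μ_s over S' (i.e., μ_s(b') ≤ μ_s(b) for all b' ∈ S') if and only if b minimizes the secondary average delay D_s over S' (i.e., D_s(b) ≤ D_s(b') for all b' ∈ S'). Hence the problems of maximizing μ_s and minimizing D_s over a common feasible set contained in the secondary stability region have identical sets of optimal solutions. -/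
/-!
Both objectives are monotone in `b` alone: `μ_s` is linear with positive slope, and on the
stability region `D_s` is a Möbius function `b ↦ (α b + β) / (κ (γ b - δ))` whose determinant
condition `α δ + β γ > 0` makes it strictly decreasing. Hence maximizing `μ_s` and minimizing
`D_s` over `S'` both mean taking the largest element of `S'`.
-/

theorem forall_le_iff_forall_ge_of_strictMonoOn_of_strictAntiOn {α β γ : Type*}
    [LinearOrder α] [Preorder β] [Preorder γ] {f : α → β} {g : α → γ} {s : Set α}
    (hf : StrictMonoOn f s) (hg : StrictAntiOn g s) {a : α} (ha : a ∈ s) :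
    (∀ x ∈ s, f x ≤ f a) ↔ (∀ x ∈ s, g a ≤ g x) := by
  have hf_iff : ∀ x ∈ s, f x ≤ f a ↔ x ≤ a := fun x hx => hf.le_iff_le hx ha
  have hg_iff : ∀ x ∈ s, g a ≤ g x ↔ x ≤ a := fun x hx => hg.le_iff_ge ha hx
  exact forall₂_congr fun x hx => (hf_iff x hx).trans (hg_iff x hx).symm

theorem strictAntiOn_div_affine {α β γ δ κ : ℝ} (hκ : 0 < κ) (hdet : 0 < α * δ + β * γ) :
    StrictAntiOn (fun b => (α * b + β) / (κ * (γ * b - δ))) {b | δ < γ * b} := by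
  intro x hx y hy hxy
  have hx' : 0 < κ * (γ * x - δ) := mul_pos hκ (sub_pos.mpr hx)
  have hy' : 0 < κ * (γ * y - δ) := mul_pos hκ (sub_pos.mpr hy)
  rw [div_lt_div_iff₀ hy' hx']
  -- the two cross products differ by `κ (y - x) (α δ + β γ)`
  nlinarith [mul_pos (mul_pos hκ (sub_pos.mpr hxy)) hdet]

/-- Equivalence of P2 and P4: For any feasible set `S'` contained in the
secondary stability region, a point `b ∈ S'` maximizes the secondary throughput `μ_s`
over `S'` iff it minimizes the secondary average delay `D_s` over `S'`. -/
theorem P2_P4_equivalence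
    (h_sd lam_p lam_s mu_p : ℝ)
    (hsd : 0 < h_sd) (hlp : 0 < lam_p) (hlm : lam_p < mu_p) (hmp1 : mu_p ≤ 1)
    (hls0 : 0 < lam_s) (hls1 : lam_s < 1)
    (μ_s : ℝ → ℝ)
    (hμs : ∀ b : ℝ, μ_s b = b * h_sd * (1 - lam_p / mu_p))
    (N_s : ℝ → ℝ)
    (hNs : ∀ b : ℝ, N_s b =
      (b * h_sd * lam_p * lam_s * (1 - mu_p)
        + (lam_s - lam_s ^ 2) * (mu_p - lam_p) * mu_p)
      / ((mu_p - lam_p) * (b * h_sd * (mu_p - lam_p) - lam_s * mu_p)))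
    (D_s : ℝ → ℝ)
    (hDs : ∀ b : ℝ, D_s b = N_s b / lam_s)
    (S' : Set ℝ)
    (hS' : S' ⊆ {b : ℝ | lam_s * mu_p < b * h_sd * (mu_p - lam_p)}) :
    ∀ b ∈ S', ((∀ b' ∈ S', μ_s b' ≤ μ_s b) ↔ (∀ b' ∈ S', D_s b ≤ D_s b')) := by
  have hmp : 0 < mu_p := hlp.trans hlm
  have hgap : 0 < mu_p - lam_p := sub_pos.mpr hlm
  have hμ_mono : StrictMono μ_s := by
    have hslope : 0 < h_sd * (1 - lam_p / mu_p) :=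
      mul_pos hsd (sub_pos.mpr ((div_lt_one hmp).mpr hlm))
    have hμ_linear : μ_s = fun b => h_sd * (1 - lam_p / mu_p) * b :=
      funext fun b => by rw [hμs]; ring
    exact hμ_linear ▸ strictMono_mul_left_of_pos hslope
  have hD_anti : StrictAntiOn D_s S' := by
    have hdet : 0 < h_sd * lam_p * lam_s * (1 - mu_p) * (lam_s * mu_p)
        + (lam_s - lam_s ^ 2) * (mu_p - lam_p) * mu_p * (h_sd * (mu_p - lam_p)) := by
      have : 0 < lam_s - lam_s ^ 2 := by nlinarith
      have : 0 ≤ 1 - mu_p := sub_nonneg.mpr hmp1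
      positivity
    refine ((strictAntiOn_div_affine (mul_pos hgap hls0) hdet).mono
      fun b hb => ?_).congr fun b _ => ?_
    · simpa only [Set.mem_ofPred_eq, mul_assoc, mul_comm b] using hS' hb
    · simp only [hDs, hNs, div_div]
      congr 1 <;> ring
  exact fun b hb => forall_le_iff_forall_ge_of_strictMonoOn_of_strictAntiOn
    (hμ_mono.strictMonoOn S') hD_anti hb
end

section
/- Let h_pd, h_sd, λ_p, μ_p be real numbers with 0 < λ_p < μ_p, and set N_p = (λ_p − λ_p²)/(μ_p − λ_p). Then the primary average delay function D_p(b) = (N_p + N_sp(b))/λ_p is quasiconvex in b on the convex set {b ∈ ℝ : 0 ≤ b ≤ 1 and (1−b)·h_sd·(μ_p − λ_p) − λ_p·(μ_p − h_pd) > 0}. -/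
open Set AffineMap

/-! A ratio of affine functions with positive denominator has convex sublevel sets: on the
domain, `n / d ≤ r` is the affine inequality `n - r • d ≤ 0`. The primary delay is such a ratio:
with `den b` the relay-stability expression and `num b` the numerator of `N_sp b`, both affine
in `b`, `D_p b = (N_p / λ_p * den b + num b / (λ_p μ_p (μ_p - λ_p))) / den b`. -/

theorem QuasiconvexOn.congr {𝕜 E β : Type*} [Semiring 𝕜] [PartialOrder 𝕜] [AddCommMonoid E]
    [SMul 𝕜 E] [LE β] {s : Set E} {f g : E → β} (hf : QuasiconvexOn 𝕜 s f) (hfg : EqOn f g s) :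
    QuasiconvexOn 𝕜 s g := by
  intro r
  convert hf r using 1
  ext x
  exact and_congr_right fun hx => by rw [hfg hx]

theorem quasiconvexOn_div_affineMap {𝕜 E : Type*} [Field 𝕜] [LinearOrder 𝕜]
    [IsStrictOrderedRing 𝕜] [AddCommGroup E] [Module 𝕜 E]
    {s : Set E} (hs : Convex 𝕜 s) (n d : E →ᵃ[𝕜] 𝕜)
    (hd : ∀ x ∈ s, 0 < d x) : QuasiconvexOn 𝕜 s fun x => n x / d x := by
  intro r
  have hsub : {x | x ∈ s ∧ n x / d x ≤ r} = s ∩ (n - r • d) ⁻¹' Iic 0 := by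
    ext x
    refine and_congr_right fun hx => ?_
    simp [div_le_iff₀ (hd x hx)]
  rw [hsub]
  exact hs.inter ((convex_Iic 0).affine_preimage _)

theorem primary_delay_quasiconvexOn_general
    (h_pd h_sd lam_p mu_p : ℝ)
    (N_p : ℝ)
    (N_sp : ℝ → ℝ)
    (hNsp : ∀ b : ℝ, N_sp b =
      (lam_p * (mu_p - h_pd) *
        ((1 - b) * h_sd * (1 - mu_p) * lam_p - (mu_p - h_pd) * mu_p * lam_p
          - h_pd * lam_p + mu_p ^ 2))
      / (mu_p * (mu_p - lam_p) *
          ((1 - b) * h_sd * (mu_p - lam_p) - lam_p * (mu_p - h_pd))))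
    (D_p : ℝ → ℝ)
    (hDp : ∀ b : ℝ, D_p b = (N_p + N_sp b) / lam_p) :
    QuasiconvexOn ℝ
      {b : ℝ | 0 ≤ b ∧ b ≤ 1 ∧
        (1 - b) * h_sd * (mu_p - lam_p) - lam_p * (mu_p - h_pd) > 0} D_p := by
  set c := lam_p * (mu_p - h_pd)
  set den : ℝ →ᵃ[ℝ] ℝ := lineMap (h_sd * (mu_p - lam_p) - c) (-c)
  set num : ℝ →ᵃ[ℝ] ℝ := lineMap
    (c * (h_sd * (1 - mu_p) * lam_p - (mu_p - h_pd) * mu_p * lam_p - h_pd * lam_p + mu_p ^ 2))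
    (c * (-(mu_p - h_pd) * mu_p * lam_p - h_pd * lam_p + mu_p ^ 2))
  have hden (b : ℝ) : den b = (1 - b) * h_sd * (mu_p - lam_p) - c := by
    simp only [den, lineMap_apply_ring]; ring
  have hnum (b : ℝ) : num b = c * ((1 - b) * h_sd * (1 - mu_p) * lam_p
      - (mu_p - h_pd) * mu_p * lam_p - h_pd * lam_p + mu_p ^ 2) := by
    simp only [num, lineMap_apply_ring]; ring
  have hdomain : {b : ℝ | 0 ≤ b ∧ b ≤ 1 ∧ (1 - b) * h_sd * (mu_p - lam_p) - c > 0}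
      = Icc 0 1 ∩ den ⁻¹' Ioi 0 := by
    ext b; simp [hden, and_assoc]
  rw [hdomain]
  refine (quasiconvexOn_div_affineMap ((convex_Icc 0 1).inter ((convex_Ioi 0).affine_preimage den))
    ((N_p / lam_p) • den + (lam_p * (mu_p * (mu_p - lam_p)))⁻¹ • num) den
    fun b hb => hb.2).congr fun b hb => ?_
  have hden_ne : den b ≠ 0 := (mem_Ioi.mp hb.2).ne'
  simp only [AffineMap.coe_add, AffineMap.coe_smul, Pi.add_apply, Pi.smul_apply, smul_eq_mul]
  rw [hDp, hNsp, ← hnum, ← hden, add_div, mul_div_cancel_right₀ _ hden_ne, add_div, inv_mul_eq_div,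
    div_div, div_div]
  congr 2
  ring

/-- With `0 < λ_p < μ_p`, the primary average delay
`D_p(b) = (N_p + N_sp(b))/λ_p` is quasiconvex in `b` on the convex set
`{b : 0 ≤ b ≤ 1 ∧ (1−b)·h_sd·(μ_p − λ_p) − λ_p·(μ_p − h_pd) > 0}`. -/
theorem primary_delay_quasiconvexOn
    (h_pd h_sd lam_p mu_p : ℝ)
    (hlp : 0 < lam_p) (hlm : lam_p < mu_p)
    (N_p : ℝ) (hNp : N_p = (lam_p - lam_p ^ 2) / (mu_p - lam_p))
    (N_sp : ℝ → ℝ)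
    (hNsp : ∀ b : ℝ, N_sp b =
      (lam_p * (mu_p - h_pd) *
        ((1 - b) * h_sd * (1 - mu_p) * lam_p - (mu_p - h_pd) * mu_p * lam_p
          - h_pd * lam_p + mu_p ^ 2))
      / (mu_p * (mu_p - lam_p) *
          ((1 - b) * h_sd * (mu_p - lam_p) - lam_p * (mu_p - h_pd))))
    (D_p : ℝ → ℝ)
    (hDp : ∀ b : ℝ, D_p b = (N_p + N_sp b) / lam_p) :
    QuasiconvexOn ℝ
      {b : ℝ | 0 ≤ b ∧ b ≤ 1 ∧
        (1 - b) * h_sd * (mu_p - lam_p) - lam_p * (mu_p - h_pd) > 0} D_p :=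
  primary_delay_quasiconvexOn_general h_pd h_sd lam_p mu_p N_p N_sp hNsp D_p hDp
end

section
/- Let h_sd, λ_p, λ_s, μ_p be real numbers with 0 < h_sd, 0 < λ_p < μ_p ≤ 1 and 0 < λ_s < 1. Then the secondary average delay function D_s(b) = N_s(b)/λ_s is quasiconvex in b on the convex set {b ∈ ℝ : 0 ≤ b ≤ 1 and λ_s·μ_p < b·h_sd·(μ_p − λ_p)}. -/
/-- With `0 < h_sd`, `0 < λ_p < μ_p ≤ 1` and `0 < λ_s < 1`, the secondary
average delay `D_s(b) = N_s(b)/λ_s` is quasiconvex in `b` on the convex set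
`{b : 0 ≤ b ≤ 1 ∧ λ_s·μ_p < b·h_sd·(μ_p − λ_p)}`. -/
theorem secondary_delay_quasiconvexOn
    (h_sd lam_p lam_s mu_p : ℝ)
    (hsd : 0 < h_sd) (hlp : 0 < lam_p) (hlm : lam_p < mu_p) (hmp1 : mu_p ≤ 1)
    (hls0 : 0 < lam_s) (hls1 : lam_s < 1)
    (N_s : ℝ → ℝ)
    (hNs : ∀ b : ℝ, N_s b =
      (b * h_sd * lam_p * lam_s * (1 - mu_p)
        + (lam_s - lam_s ^ 2) * (mu_p - lam_p) * mu_p)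
      / ((mu_p - lam_p) * (b * h_sd * (mu_p - lam_p) - lam_s * mu_p)))
    (D_s : ℝ → ℝ)
    (hDs : ∀ b : ℝ, D_s b = N_s b / lam_s) :
    QuasiconvexOn ℝ
      {b : ℝ | 0 ≤ b ∧ b ≤ 1 ∧ lam_s * mu_p < b * h_sd * (mu_p - lam_p)} D_s := by
  have hΔ : 0 < mu_p - lam_p := sub_pos.2 hlm
  set s : Set ℝ := {b : ℝ | 0 ≤ b ∧ b ≤ 1 ∧ lam_s * mu_p < b * h_sd * (mu_p - lam_p)}
  have hconv : Convex ℝ s := by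
    intro x hx y hy a b ha hb hab
    obtain ⟨hx0, hx1, hx2⟩ := hx
    obtain ⟨hy0, hy1, hy2⟩ := hy
    refine ⟨by simp [smul_eq_mul]; nlinarith, by simp [smul_eq_mul]; nlinarith, ?_⟩
    simp only [smul_eq_mul]
    rcases eq_or_lt_of_le ha with rfl | ha'
    · have hb' : b = 1 := by linarith
      subst hb'; simpa using hy2
    · have h1 : a * (lam_s * mu_p) < a * (x * h_sd * (mu_p - lam_p)) :=
        mul_lt_mul_of_pos_left hx2 ha'
      have h2 : b * (lam_s * mu_p) ≤ b * (y * h_sd * (mu_p - lam_p)) :=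
        mul_le_mul_of_nonneg_left hy2.le hb
      have h3 : a * (lam_s * mu_p) + b * (lam_s * mu_p) = lam_s * mu_p := by
        rw [← add_mul, hab, one_mul]
      nlinarith [h1, h2, h3]
  have hanti : AntitoneOn D_s s := by
    intro x hx y hy hxy
    obtain ⟨hx0, hx1, hx2⟩ := hx
    obtain ⟨hy0, hy1, hy2⟩ := hy
    have hdx : 0 < (mu_p - lam_p) * (x * h_sd * (mu_p - lam_p) - lam_s * mu_p) :=
      mul_pos hΔ (by linarith)
    have hdy : 0 < (mu_p - lam_p) * (y * h_sd * (mu_p - lam_p) - lam_s * mu_p) :=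
      mul_pos hΔ (by linarith)
    rw [hDs, hDs, div_le_div_iff_of_pos_right hls0, hNs, hNs, div_le_div_iff₀ hdy hdx]
    have h1mu : (0:ℝ) ≤ 1 - mu_p := by linarith
    have hls : (0:ℝ) < lam_s - lam_s ^ 2 := by nlinarith
    have hCD : 0 ≤ ((lam_s - lam_s ^ 2) * (mu_p - lam_p) * mu_p) * ((mu_p - lam_p) ^ 2 * h_sd) :=
      mul_nonneg (mul_nonneg (mul_nonneg hls.le hΔ.le) (by linarith))
        (mul_nonneg (sq_nonneg _) hsd.le)
    have hAE : 0 ≤ (h_sd * lam_p * lam_s * (1 - mu_p)) * ((mu_p - lam_p) * (lam_s * mu_p)) :=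
      mul_nonneg (mul_nonneg (mul_nonneg (mul_nonneg hsd.le hlp.le) hls0.le) h1mu)
        (mul_nonneg hΔ.le (mul_nonneg hls0.le (by linarith)))
    nlinarith [mul_nonneg (sub_nonneg.2 hxy) hCD, mul_nonneg (sub_nonneg.2 hxy) hAE]
  exact hanti.quasiconvexOn hconv
end
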